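/- Let (G, B) be a metric n-Lie algebra with Levi decomposition G = S ⊕ R. Then the centralizer of R in G decomposes as C_G(R) = C(G) ⊕ R^⊥, and [S,...,S, R^⊥] = R^⊥. -/

import Mathlib

open scoped BigOperators

section NLiePreamble

variable {n : ℕ} {G : Type*} [AddCommGroup G] [Module ℂ G]

/-- The inner derivation `ad_y z = [y₁, …, y_{n+1}, z]` determined by an
`(n+2)`-ary alternating bracket. -/
def nAd (br : AlternatingMap ℂ G G (Fin (n + 2))) (y : Fin (n + 1) → G) (z : G) : G :=
  br (Fin.snoc y z)

/-- The generalized Jacobi identity: the bracket makes `G` an `(n+2)`-Lie algebra. -/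
def IsNLie (br : AlternatingMap ℂ G G (Fin (n + 2))) : Prop :=
  ∀ (x : Fin (n + 2) → G) (y : Fin (n + 1) → G),
    nAd br y (br x) = ∑ i, br (Function.update x i (nAd br y (x i)))

/-- A submodule `I` is an ideal: `[I, G, …, G] ⊆ I`. -/
def IsIdeal (br : AlternatingMap ℂ G G (Fin (n + 2))) (I : Submodule ℂ G) : Prop :=
  ∀ (y : Fin (n + 1) → G), ∀ x ∈ I, br (Fin.snoc y x) ∈ I

/-- Invariance of a bilinear form under the bracket. -/
def IsInvariantForm (br : AlternatingMap ℂ G G (Fin (n + 2)))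
    (K : LinearMap.BilinForm ℂ G) : Prop :=
  ∀ (x : Fin (n + 1) → G) (y₁ y₂ : G),
    K (br (Fin.snoc x y₁)) y₂ = - K (br (Fin.snoc x y₂)) y₁

/-- A metric on an `n`-Lie algebra: a nondegenerate invariant symmetric bilinear form. -/
def IsMetric (br : AlternatingMap ℂ G G (Fin (n + 2)))
    (B : LinearMap.BilinForm ℂ G) : Prop :=
  B.Nondegenerate ∧ (∀ x y : G, B x y = B y x) ∧ IsInvariantForm br B

/-- The span `[W₁, …, W_{n+2}]` of all brackets with entries in the given subspaces. -/
def bracketSpan (br : AlternatingMap ℂ G G (Fin (n + 2)))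
    (W : Fin (n + 2) → Submodule ℂ G) : Submodule ℂ G :=
  Submodule.span ℂ {z | ∃ w : Fin (n + 2) → G, (∀ i, w i ∈ W i) ∧ z = br w}

/-- The derived algebra `[G, …, G]`. -/
def derivedAlg (br : AlternatingMap ℂ G G (Fin (n + 2))) : Submodule ℂ G :=
  bracketSpan br fun _ => ⊤

/-- `[I, …, I]` for a subspace `I`. -/
def derivedStep (br : AlternatingMap ℂ G G (Fin (n + 2))) (I : Submodule ℂ G) :
    Submodule ℂ G :=
  bracketSpan br fun _ => I

/-- `[J, H, G, …, G]` for subspaces `J, H`. -/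
def pairBracket (br : AlternatingMap ℂ G G (Fin (n + 2))) (J H : Submodule ℂ G) :
    Submodule ℂ G :=
  bracketSpan br (Fin.cons J (Fin.cons H fun _ => (⊤ : Submodule ℂ G)))

/-- `[I, G, …, G]` for a subspace `I`. -/
def idealBracket (br : AlternatingMap ℂ G G (Fin (n + 2))) (I : Submodule ℂ G) :
    Submodule ℂ G :=
  bracketSpan br (Fin.cons I fun _ => (⊤ : Submodule ℂ G))

/-- The centralizer `C_G(I) = {x : [x, I, G, …, G] = 0}` of a subspace `I`. -/
def centralizer (br : AlternatingMap ℂ G G (Fin (n + 2))) (I : Submodule ℂ G) :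
    Submodule ℂ G where
  carrier := {x | ∀ v ∈ I, ∀ y : Fin n → G, br (Fin.cons x (Fin.cons v y)) = 0}
  add_mem' := by
    intro a b ha hb v hv y
    have := br.toMultilinearMap.cons_add (Fin.cons v y) a b
    simp only [AlternatingMap.coe_multilinearMap] at this
    rw [this, ha v hv y, hb v hv y, add_zero]
  zero_mem' := by
    intro v hv y
    have := br.toMultilinearMap.cons_smul (Fin.cons v y) (0 : ℂ) 0
    simpa using (br.toMultilinearMap.map_coord_zero (m := Fin.cons 0 (Fin.cons v y)) 0 rfl)
  smul_mem' := by
    intro c a ha v hv y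
    have := br.toMultilinearMap.cons_smul (Fin.cons v y) c a
    simp only [AlternatingMap.coe_multilinearMap] at this
    rw [this, ha v hv y, smul_zero]

/-- The center `C(G)`. -/
def center (br : AlternatingMap ℂ G G (Fin (n + 2))) : Submodule ℂ G :=
  centralizer br ⊤

/-- Nondegeneracy of `B` restricted to a subspace `W`. -/
def NondegOn (B : LinearMap.BilinForm ℂ G) (W : Submodule ℂ G) : Prop :=
  ∀ x ∈ W, (∀ y ∈ W, B x y = 0) → x = 0

/-- `(G, B)` is `B`-irreducible: no nontrivial nondegenerate ideals. -/
def BIrreducible (br : AlternatingMap ℂ G G (Fin (n + 2)))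
    (B : LinearMap.BilinForm ℂ G) : Prop :=
  ∀ I : Submodule ℂ G, IsIdeal br I → NondegOn B I → I = ⊥ ∨ I = ⊤

/-- `W` is a subalgebra. -/
def IsSubalgebra (br : AlternatingMap ℂ G G (Fin (n + 2))) (W : Submodule ℂ G) : Prop :=
  ∀ x : Fin (n + 2) → G, (∀ i, x i ∈ W) → br x ∈ W

/-- `I` is an ideal of the subalgebra `W`. -/
def IsIdealOf (br : AlternatingMap ℂ G G (Fin (n + 2))) (W I : Submodule ℂ G) : Prop :=
  I ≤ W ∧ ∀ (y : Fin (n + 1) → G), (∀ i, y i ∈ W) → ∀ x ∈ I, br (Fin.snoc y x) ∈ I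

/-- The subalgebra `W` is a simple `n`-Lie algebra. -/
def IsSimpleAlg (br : AlternatingMap ℂ G G (Fin (n + 2))) (W : Submodule ℂ G) : Prop :=
  derivedStep br W ≠ ⊥ ∧ ∀ I : Submodule ℂ G, IsIdealOf br W I → I = ⊥ ∨ I = W

/-- The subalgebra `W` is strong semisimple: a direct sum of simple ideals. -/
def IsStrongSemisimple (br : AlternatingMap ℂ G G (Fin (n + 2)))
    (W : Submodule ℂ G) : Prop :=
  ∃ (m : ℕ) (S : Fin m → Submodule ℂ G),
    (∀ i, IsIdealOf br W (S i) ∧ IsSimpleAlg br (S i)) ∧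
    iSupIndep S ∧ (⨆ i, S i) = W

/-- `I` is solvable (via the derived series). -/
def NLieSolvable (br : AlternatingMap ℂ G G (Fin (n + 2))) (I : Submodule ℂ G) : Prop :=
  ∃ k : ℕ, (derivedStep br)^[k] I = ⊥

/-- `R` is the radical: the maximal solvable ideal. -/
def NLieRadical (br : AlternatingMap ℂ G G (Fin (n + 2))) (R : Submodule ℂ G) : Prop :=
  IsIdeal br R ∧ NLieSolvable br R ∧
    ∀ I : Submodule ℂ G, IsIdeal br I → NLieSolvable br I → I ≤ R

/-- A Levi decomposition `G = S ⊕ R`. -/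
def IsLeviDecomp (br : AlternatingMap ℂ G G (Fin (n + 2)))
    (S R : Submodule ℂ G) : Prop :=
  NLieRadical br R ∧ IsSubalgebra br S ∧ IsStrongSemisimple br S ∧ IsCompl S R

/-- A minimal ideal of `G`. -/
def IsMinimalIdeal (br : AlternatingMap ℂ G G (Fin (n + 2))) (J : Submodule ℂ G) : Prop :=
  IsIdeal br J ∧ J ≠ ⊥ ∧
    ∀ I : Submodule ℂ G, IsIdeal br I → I ≤ J → I = ⊥ ∨ I = J

/-- The socle: the sum of all minimal ideals. -/
def socle (br : AlternatingMap ℂ G G (Fin (n + 2))) : Submodule ℂ G :=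
  sSup {J | IsMinimalIdeal br J}

/-- `H` is an `S`-submodule: `[S, …, S, H] ⊆ H`. -/
def IsSModule (br : AlternatingMap ℂ G G (Fin (n + 2))) (S H : Submodule ℂ G) : Prop :=
  ∀ (y : Fin (n + 1) → G), (∀ i, y i ∈ S) → ∀ x ∈ H, br (Fin.snoc y x) ∈ H

/-- `H` is an irreducible `S`-submodule. -/
def IsIrreducibleSModule (br : AlternatingMap ℂ G G (Fin (n + 2)))
    (S H : Submodule ℂ G) : Prop :=
  IsSModule br S H ∧ H ≠ ⊥ ∧
    ∀ K : Submodule ℂ G, K ≤ H → IsSModule br S K → K = ⊥ ∨ K = H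

/-- The space of invariant symmetric bilinear forms on `G`. -/
def invSymForms (br : AlternatingMap ℂ G G (Fin (n + 2))) :
    Submodule ℂ (LinearMap.BilinForm ℂ G) where
  carrier := {K | (∀ x y : G, K x y = K y x) ∧ IsInvariantForm br K}
  add_mem' := by
    rintro K L ⟨hK1, hK2⟩ ⟨hL1, hL2⟩
    refine ⟨fun x y => by simp [hK1 x y, hL1 x y], fun x y₁ y₂ => ?_⟩
    simp only [LinearMap.add_apply]
    rw [hK2 x y₁ y₂, hL2 x y₁ y₂]; ring
  zero_mem' := ⟨fun x y => by simp, fun x y₁ y₂ => by simp⟩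
  smul_mem' := by
    rintro c K ⟨hK1, hK2⟩
    refine ⟨fun x y => by simp [hK1 x y], fun x y₁ y₂ => ?_⟩
    simp only [LinearMap.smul_apply, smul_eq_mul]
    rw [hK2 x y₁ y₂]; ring

/-- The span of all nondegenerate invariant symmetric bilinear forms (the metric space `B(G)`). -/
def metricSpan (br : AlternatingMap ℂ G G (Fin (n + 2))) :
    Submodule ℂ (LinearMap.BilinForm ℂ G) :=
  Submodule.span ℂ {K : LinearMap.BilinForm ℂ G | IsMetric br K}

/-- `Γ_B(G)`: `B`-self-adjoint elements of the centroid. -/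
def centroidB (br : AlternatingMap ℂ G G (Fin (n + 2)))
    (B : LinearMap.BilinForm ℂ G) : Submodule ℂ (G →ₗ[ℂ] G) where
  carrier := {φ | (∀ (x : Fin (n + 1) → G) (z : G),
      φ (br (Fin.snoc x z)) = br (Fin.snoc x (φ z))) ∧
    ∀ x y : G, B (φ x) y = B x (φ y)}
  add_mem' := by
    rintro φ ψ ⟨hφ1, hφ2⟩ ⟨hψ1, hψ2⟩
    constructor
    · intro x z
      have hadd := br.toMultilinearMap.snoc_add x (φ z) (ψ z)
      simp only [AlternatingMap.coe_multilinearMap] at hadd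
      simp [hφ1 x z, hψ1 x z, hadd]
    · intro x y; simp [hφ2 x y, hψ2 x y]
  zero_mem' := by
    constructor
    · intro x z
      have h0 := br.toMultilinearMap.map_coord_zero (m := Fin.snoc x (0 : G)) (Fin.last _)
        (by simp)
      simp only [AlternatingMap.coe_multilinearMap] at h0
      simp [h0]
    · intro x y; simp
  smul_mem' := by
    rintro c φ ⟨hφ1, hφ2⟩
    constructor
    · intro x z
      have hs := br.toMultilinearMap.snoc_smul x c (φ z)
      simp only [AlternatingMap.coe_multilinearMap] at hs
      simp [hφ1 x z, hs]
    · intro x y; simp [hφ2 x y]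

end NLiePreamble

/-!
Invariance of the metric turns centralizers into orthogonal complements:
`C_G(I) = [I, G, …, G]^⊥`, in particular `C(G) = [G, …, G]^⊥`. Since `G = S ⊕ R` with `S` a
subalgebra and `R` an ideal, multilinear expansion gives `[R, G, …, G] = [G, …, G] ∩ R`, and taking
orthogonals yields `C_G(R) = C(G) + R^⊥`. The simple ideals of `S` are perfect (by the Jacobi
identity their derived algebras are nonzero ideals), so `S ≤ [G, …, G]`, hence
`[G, …, G] + R = G` and `C(G) ∩ R^⊥ = 0`.

Finally `T = [S, …, S, R^⊥]` lies in the ideal `R^⊥`. Conversely, if `x ⊥ T`, invariance puts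
`[S, …, S, x]` in `R^⊥⊥ = R`, so the `S`-component of `x` is annihilated by `S`; a strong
semisimple algebra has trivial center, so `x ∈ R`. Thus `T^⊥ ≤ R`, i.e. `R^⊥ ≤ T`.
-/

open LinearMap.BilinForm

namespace LinearMap.BilinForm

variable {R M : Type*} [CommSemiring R] [AddCommMonoid M] [Module R M] (B : LinearMap.BilinForm R M)

lemma orthogonal_sup (U W : Submodule R M) :
    B.orthogonal (U ⊔ W) = B.orthogonal U ⊓ B.orthogonal W := by
  refine le_antisymm (le_inf (orthogonal_le le_sup_left) (orthogonal_le le_sup_right)) ?_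
  rintro x ⟨hU, hW⟩ z hz
  obtain ⟨u, hu, w, hw, rfl⟩ := Submodule.mem_sup.1 hz
  rw [map_add, LinearMap.add_apply, hU u hu, hW w hw, add_zero]

lemma orthogonal_inf {K V : Type*} [Field K] [AddCommGroup V] [Module K V] [FiniteDimensional K V]
    {B : LinearMap.BilinForm K V} (hnd : B.Nondegenerate) (hrefl : B.IsRefl) (U W : Submodule K V) :
    B.orthogonal (U ⊓ W) = B.orthogonal U ⊔ B.orthogonal W := by
  conv_lhs => rw [← orthogonal_orthogonal hnd hrefl U, ← orthogonal_orthogonal hnd hrefl W]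
  rw [← orthogonal_sup, orthogonal_orthogonal hnd hrefl]

end LinearMap.BilinForm

section NLieAlgebra

variable {n : ℕ} {G : Type*} [AddCommGroup G] [Module ℂ G]
  {br : AlternatingMap ℂ G G (Fin (n + 2))}

variable (br) in
def nAdₗ (y : Fin (n + 1) → G) : G →ₗ[ℂ] G where
  toFun := nAd br y
  map_add' := br.toMultilinearMap.snoc_add y
  map_smul' := br.toMultilinearMap.snoc_smul y

@[simp] lemma nAdₗ_apply (y : Fin (n + 1) → G) (z : G) : nAdₗ br y z = br (Fin.snoc y z) := rfl

lemma map_snoc_eq_zero_iff (u : Fin (n + 1) → G) (x : G) :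
    br (Fin.snoc u x) = 0 ↔ br (Fin.cons x u) = 0 := by
  rw [Fin.snoc_eq_cons_rotate]
  change br (Fin.cons x u ∘ finRotate _) = 0 ↔ _
  rw [br.map_perm, smul_eq_zero_iff_eq]

lemma map_mem_of_map_comp_swap_mem {P : Submodule ℂ G}
    (w : Fin (n + 2) → G) (i j : Fin (n + 2)) (h : br (w ∘ Equiv.swap i j) ∈ P) : br w ∈ P := by
  rcases eq_or_ne i j with rfl | hij
  · simpa using h
  · rwa [br.map_swap w hij, neg_mem_iff] at h

lemma IsIdeal.map_mem {I : Submodule ℂ G} (hI : IsIdeal br I) {w : Fin (n + 2) → G}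
    {i : Fin (n + 2)} (hi : w i ∈ I) : br w ∈ I := by
  refine map_mem_of_map_comp_swap_mem w i (Fin.last _) ?_
  rw [← Fin.snoc_init_self (w ∘ _)]
  exact hI _ _ (by simpa using hi)

lemma apply_mem_bracketSpan {W : Fin (n + 2) → Submodule ℂ G} {w : Fin (n + 2) → G}
    (hw : ∀ i, w i ∈ W i) : br w ∈ bracketSpan br W :=
  Submodule.subset_span ⟨w, hw, rfl⟩

lemma bracketSpan_le {W : Fin (n + 2) → Submodule ℂ G} {P : Submodule ℂ G}
    (h : ∀ w : Fin (n + 2) → G, (∀ i, w i ∈ W i) → br w ∈ P) : bracketSpan br W ≤ P := by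
  rw [bracketSpan, Submodule.span_le]
  rintro _ ⟨w, hw, rfl⟩
  exact h w hw

lemma bracketSpan_mono {W W' : Fin (n + 2) → Submodule ℂ G} (h : ∀ i, W i ≤ W' i) :
    bracketSpan br W ≤ bracketSpan br W' :=
  bracketSpan_le fun _ hw => apply_mem_bracketSpan fun i => h i (hw i)

lemma IsIdeal.bracketSpan_le {I : Submodule ℂ G} (hI : IsIdeal br I)
    {W : Fin (n + 2) → Submodule ℂ G} (i : Fin (n + 2)) (hi : W i ≤ I) : bracketSpan br W ≤ I :=
  _root_.bracketSpan_le fun _ hw => hI.map_mem (hi (hw i))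

lemma apply_snoc_mem_bracketSpan_snoc {W : Fin (n + 1) → Submodule ℂ G} {V : Submodule ℂ G}
    {y : Fin (n + 1) → G} (hy : ∀ i, y i ∈ W i) {z : G} (hz : z ∈ V) :
    br (Fin.snoc y z) ∈ bracketSpan br (Fin.snoc W V) :=
  apply_mem_bracketSpan fun i => Fin.lastCases (by simpa) (fun j => by simpa using hy j) i

lemma mem_idealBracket {I : Submodule ℂ G} {w : Fin (n + 2) → G} {i : Fin (n + 2)}
    (hi : w i ∈ I) : br w ∈ idealBracket br I := by
  refine map_mem_of_map_comp_swap_mem w 0 i (apply_mem_bracketSpan fun j => ?_)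
  cases j using Fin.cases with
  | zero => simpa using hi
  | succ k => exact Submodule.mem_top

lemma idealBracket_top : idealBracket br ⊤ = derivedAlg br := by
  unfold idealBracket derivedAlg
  congr 1
  funext i
  cases i using Fin.cases <;> rfl

lemma mem_centralizer_iff {I : Submodule ℂ G} {x : G} :
    x ∈ centralizer br I ↔ ∀ u : Fin (n + 1) → G, u 0 ∈ I → br (Fin.snoc u x) = 0 := by
  simp_rw [map_snoc_eq_zero_iff]
  refine ⟨fun hx u hu => ?_, fun hx v hv y => by simpa using hx (Fin.cons v y) (by simpa)⟩
  rw [← Fin.cons_self_tail u]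
  exact hx _ hu _

section Metric

variable {B : LinearMap.BilinForm ℂ G}

lemma mem_orthogonal_bracketSpan_iff {W : Fin (n + 2) → Submodule ℂ G} {x : G} :
    x ∈ B.orthogonal (bracketSpan br W) ↔ ∀ w, (∀ i, w i ∈ W i) → B (br w) x = 0 :=
  ⟨fun hx _ hw => hx _ (apply_mem_bracketSpan hw),
    fun h _ hz => bracketSpan_le (P := LinearMap.ker (B.flip x)) h hz⟩

lemma centralizer_eq_orthogonal_idealBracket (hnd : B.Nondegenerate)
    (hinv : IsInvariantForm br B) (I : Submodule ℂ G) :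
    centralizer br I = B.orthogonal (idealBracket br I) := by
  ext x
  rw [mem_centralizer_iff, idealBracket, mem_orthogonal_bracketSpan_iff]
  refine ⟨fun hx w hw => ?_, fun hx u hu => hnd.1 _ fun a => ?_⟩
  · rw [← Fin.snoc_init_self w, hinv, hx (Fin.init w) (hw 0), map_zero,
      LinearMap.zero_apply, neg_zero]
  · rw [hinv, hx _ fun i => ?_, neg_zero]
    cases i using Fin.cases with
    | zero => exact hu
    | succ k => exact Submodule.mem_top

lemma center_eq_orthogonal_derivedAlg (hnd : B.Nondegenerate) (hinv : IsInvariantForm br B) :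
    center br = B.orthogonal (derivedAlg br) := by
  rw [center, centralizer_eq_orthogonal_idealBracket hnd hinv, idealBracket_top]

lemma IsIdeal.orthogonal (hrefl : B.IsRefl) (hinv : IsInvariantForm br B) {I : Submodule ℂ G}
    (hI : IsIdeal br I) : IsIdeal br (B.orthogonal I) := fun y x hx r hr =>
  hrefl _ _ (by rw [hinv, hx _ (hI y r hr), neg_zero])

lemma bracket_mem_orthogonal_of_mem_orthogonal_bracketSpan (hrefl : B.IsRefl)
    (hinv : IsInvariantForm br B) {W V : Submodule ℂ G} {x : G}
    (hx : x ∈ B.orthogonal (bracketSpan br (Fin.snoc (fun _ => W) V)))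
    {y : Fin (n + 1) → G} (hy : ∀ i, y i ∈ W) : br (Fin.snoc y x) ∈ B.orthogonal V := fun v hv =>
  hrefl _ _ (by rw [hinv, hx _ (apply_snoc_mem_bracketSpan_snoc hy hv), neg_zero])

end Metric

lemma IsIdealOf.isSubalgebra {W I : Submodule ℂ G} (h : IsIdealOf br W I) : IsSubalgebra br I :=
  fun w hw => by
    rw [← Fin.snoc_init_self w]
    exact h.2 _ (fun i => h.1 (hw _)) _ (hw _)

lemma IsSubalgebra.isIdealOf_self {W : Submodule ℂ G} (h : IsSubalgebra br W) :
    IsIdealOf br W W :=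
  ⟨le_rfl, fun _ hy _ hx => h _ fun i => Fin.lastCases (by simpa) (fun j => by simpa using hy j) i⟩

lemma IsSubalgebra.derivedStep_le {W : Submodule ℂ G} (h : IsSubalgebra br W) :
    derivedStep br W ≤ W :=
  bracketSpan_le h

lemma IsNLie.isIdealOf_derivedStep (hLie : IsNLie br) {W I : Submodule ℂ G}
    (h : IsIdealOf br W I) : IsIdealOf br W (derivedStep br I) := by
  refine ⟨h.isSubalgebra.derivedStep_le.trans h.1, fun y hy x hx => ?_⟩
  suffices derivedStep br I ≤ (derivedStep br I).comap (nAdₗ br y) from this hx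
  refine bracketSpan_le fun w hw => ?_
  change nAd br y (br w) ∈ derivedStep br I
  rw [hLie w y]
  refine Submodule.sum_mem _ fun i _ => apply_mem_bracketSpan fun j => ?_
  rcases eq_or_ne j i with rfl | hji
  · rw [Function.update_self]
    exact h.2 y hy _ (hw j)
  · rw [Function.update_of_ne hji]
    exact hw j

lemma IsSimpleAlg.derivedStep_eq {I : Submodule ℂ G} (hsimp : IsSimpleAlg br I) (hLie : IsNLie br)
    (hI : IsSubalgebra br I) : derivedStep br I = I :=
  (hsimp.2 _ (hLie.isIdealOf_derivedStep hI.isIdealOf_self)).resolve_left hsimp.1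

lemma IsSimpleAlg.eq_zero_of_forall_bracket_eq_zero {I : Submodule ℂ G} (hsimp : IsSimpleAlg br I)
    {x : G} (hx : x ∈ I) (h : ∀ y : Fin (n + 1) → G, (∀ i, y i ∈ I) → br (Fin.snoc y x) = 0) :
    x = 0 := by
  set Z := I ⊓ ⨅ y : {y : Fin (n + 1) → G // ∀ i, y i ∈ I}, LinearMap.ker (nAdₗ br y)
  have hZ : ∀ {z}, z ∈ Z → ∀ y : Fin (n + 1) → G, (∀ i, y i ∈ I) → br (Fin.snoc y z) = 0 :=
    fun hz y hy => (Submodule.mem_iInf _).1 hz.2 ⟨y, hy⟩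
  have hZideal : IsIdealOf br I Z :=
    ⟨inf_le_left, fun y hy z hz => by rw [hZ hz y hy]; exact Z.zero_mem⟩
  rcases hsimp.2 Z hZideal with hbot | htop
  · have hxZ : x ∈ Z := ⟨hx, (Submodule.mem_iInf _).2 fun y => h y.1 y.2⟩
    simpa [hbot] using hxZ
  · refine absurd (eq_bot_iff.2 (bracketSpan_le fun w hw => ?_)) hsimp.1
    rw [← Fin.snoc_init_self w, hZ (htop.ge (hw _)) (Fin.init w) fun i => hw _]
    exact Submodule.zero_mem ⊥

lemma IsStrongSemisimple.le_derivedAlg {S : Submodule ℂ G} (hss : IsStrongSemisimple br S)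
    (hLie : IsNLie br) : S ≤ derivedAlg br := by
  obtain ⟨m, Si, hSi, -, rfl⟩ := hss
  refine iSup_le fun i => ?_
  rw [← (hSi i).2.derivedStep_eq hLie (hSi i).1.isSubalgebra]
  exact bracketSpan_mono fun _ => le_top

lemma IsStrongSemisimple.eq_zero_of_forall_bracket_eq_zero {S : Submodule ℂ G}
    (hss : IsStrongSemisimple br S) {a : G} (ha : a ∈ S)
    (h : ∀ y : Fin (n + 1) → G, (∀ i, y i ∈ S) → br (Fin.snoc y a) = 0) : a = 0 := by
  obtain ⟨m, Si, hSi, hindep, rfl⟩ := hss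
  obtain ⟨μ, rfl⟩ := (Submodule.mem_iSup_finset_iff_exists_sum (s := Finset.univ) Si a).1
    (by simpa using ha)
  have hμ : ∀ y : Fin (n + 1) → G, (∀ k, y k ∈ ⨆ i, Si i) → ∀ i, br (Fin.snoc y (μ i)) = 0 := by
    intro y hy i
    refine (iSupIndep_iff_finsetSum_eq_zero_imp_eq_zero Si).1 hindep Finset.univ
      (fun j => nAdₗ br y (μ j)) (fun j _ => (hSi j).1.2 y hy _ (μ j).2) ?_ i (Finset.mem_univ i)
    rw [← map_sum]
    exact h y hy
  refine Finset.sum_eq_zero fun i _ => (hSi i).2.eq_zero_of_forall_bracket_eq_zero (μ i).2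
    fun y hy => hμ y (fun k => (hSi i).1.1 (hy k)) i

lemma derivedAlg_le_derivedStep_sup_idealBracket {S R : Submodule ℂ G} (hSR : S ⊔ R = ⊤) :
    derivedAlg br ≤ derivedStep br S ⊔ idealBracket br R := by
  refine bracketSpan_le fun w _ => ?_
  choose a ha b hb hab using fun i => Submodule.mem_sup.1 (hSR ▸ Submodule.mem_top (x := w i))
  rw [show w = a + b from funext fun i => (hab i).symm]
  change br.toMultilinearMap (a + b) ∈ _
  rw [br.toMultilinearMap.map_add_univ]
  refine Submodule.sum_mem _ fun t _ => ?_
  by_cases ht : ∀ i, i ∈ t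
  · exact Submodule.mem_sup_left (apply_mem_bracketSpan fun i => by simpa [ht i] using ha i)
  · obtain ⟨i, hi⟩ := not_forall.1 ht
    exact Submodule.mem_sup_right (mem_idealBracket (i := i) (by simpa [hi] using hb i))

lemma idealBracket_eq_derivedAlg_inf {S R : Submodule ℂ G} (hSR : IsCompl S R)
    (hS : IsSubalgebra br S) (hR : IsIdeal br R) :
    idealBracket br R = derivedAlg br ⊓ R := by
  refine le_antisymm (le_inf (bracketSpan_mono fun _ => le_top) (hR.bracketSpan_le 0 le_rfl)) ?_
  calc derivedAlg br ⊓ R ≤ (idealBracket br R ⊔ derivedStep br S) ⊓ R := by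
        rw [sup_comm]
        exact inf_le_inf_right _ (derivedAlg_le_derivedStep_sup_idealBracket hSR.codisjoint.eq_top)
    _ = idealBracket br R ⊔ derivedStep br S ⊓ R :=
        sup_inf_assoc_of_le _ (hR.bracketSpan_le 0 le_rfl)
    _ = idealBracket br R := by
        rw [(hSR.disjoint.mono_left hS.derivedStep_le).eq_bot, sup_bot_eq]

lemma mem_of_forall_bracket_mem {S R : Submodule ℂ G} (hS : IsSubalgebra br S)
    (hss : IsStrongSemisimple br S) (hSR : IsCompl S R) (hR : IsIdeal br R) {x : G}
    (hx : ∀ y : Fin (n + 1) → G, (∀ i, y i ∈ S) → br (Fin.snoc y x) ∈ R) : x ∈ R := by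
  obtain ⟨u, hu, v, hv, rfl⟩ :=
    Submodule.mem_sup.1 (hSR.codisjoint.eq_top ▸ Submodule.mem_top (x := x))
  suffices u = 0 by rwa [this, zero_add]
  refine hss.eq_zero_of_forall_bracket_eq_zero hu fun y hy => ?_
  have huS : br (Fin.snoc y u) ∈ S := hS.isIdealOf_self.2 y hy u hu
  have huR : br (Fin.snoc y u) ∈ R := by
    simpa [← nAdₗ_apply] using R.sub_mem (hx y hy) (hR y v hv)
  exact Submodule.disjoint_def.1 hSR.disjoint _ huS huR

end NLieAlgebra

variable {n : ℕ} {G : Type*} [AddCommGroup G] [Module ℂ G]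

theorem centralizer_radical_decomp
    (br : AlternatingMap ℂ G G (Fin (n + 2))) (hLie : IsNLie br)
    [FiniteDimensional ℂ G]
    (B : LinearMap.BilinForm ℂ G) (hB : IsMetric br B)
    (S R : Submodule ℂ G) (hLevi : IsLeviDecomp br S R) :
    centralizer br R = center br ⊔ B.orthogonal R ∧
    center br ⊓ B.orthogonal R = ⊥ ∧
    bracketSpan br (Fin.snoc (fun _ : Fin (n + 1) => S) (B.orthogonal R)) =
      B.orthogonal R := by
  obtain ⟨hnd, hsym, hinv⟩ := hB
  obtain ⟨⟨hR, -, -⟩, hS, hss, hSR⟩ := hLevi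
  have hrefl : B.IsRefl := fun x y h => hsym x y ▸ h
  refine ⟨?_, ?_, ?_⟩
  · rw [centralizer_eq_orthogonal_idealBracket hnd hinv, center_eq_orthogonal_derivedAlg hnd hinv,
      idealBracket_eq_derivedAlg_inf hSR hS hR, orthogonal_inf hnd hrefl]
  · have hcodisj : derivedAlg br ⊔ R = ⊤ :=
      top_le_iff.1 (hSR.codisjoint.eq_top ▸ sup_le_sup_right (hss.le_derivedAlg hLie) R)
    rw [center_eq_orthogonal_derivedAlg hnd hinv, ← orthogonal_sup, hcodisj,
      orthogonal_top_eq_bot hnd]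
  · set T := bracketSpan br (Fin.snoc (fun _ : Fin (n + 1) => S) (B.orthogonal R))
    have hTR : B.orthogonal T ≤ R := fun x hx =>
      mem_of_forall_bracket_mem hS hss hSR hR fun y hy => by
        simpa [orthogonal_orthogonal hnd hrefl] using
          bracket_mem_orthogonal_of_mem_orthogonal_bracketSpan hrefl hinv hx hy
    refine le_antisymm ((hR.orthogonal hrefl hinv).bracketSpan_le (Fin.last _) (by simp)) ?_
    calc B.orthogonal R ≤ B.orthogonal (B.orthogonal T) := orthogonal_le hTR
      _ = T := orthogonal_orthogonal hnd hrefl T
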